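/- arXiv:2509.19661 — 3 statements merged into one kernel-verified Lean document; each statement's English description precedes it below -/
import Mathlib

section
/- Let X₁, …, Xₙ ∈ [0,1] and define the empirical cdf F(x) = (1/n)·#{i : Xᵢ ≤ x}. Let a*_{jk} = (1/n) Σᵢ ψ_{jk}(Xᵢ) and f*_J(x) = 1 + Σ_{j=0}^{J} Σ_{k=0}^{2^j−1} a*_{jk} ψ_{jk}(x), with F*_J(x) = ∫₀ˣ f*_J(t) dt. Then for every k = 0, 1, …, 2^{J+1}, F*_J(k·2^{−(J+1)}) = F(k·2^{−(J+1)}). -/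
/-!
On `[0, 1)`, the constant function together with the Haar functions of levels `j < J` has the
reproducing kernel `1 + ∑_{j<J} ∑_k ψ_{jk}(y) ψ_{jk}(t) = 2^J · 1[y, t lie in the same dyadic
interval of length 2^{-J}]`: passing from `J` to `J + 1`, the level-`J` term adds `2^J` when `y`
and `t` lie in the same half of their common interval and subtracts `2^J` when they lie in
opposite halves. Hence `f*_J` is the histogram of the sample on the dyadic intervals of length
`2^{-(J+1)}`: on each of them it is the empirical mass of the interval divided by its length.
Integrating interval by interval, `F*_J(k 2^{-(J+1)})` telescopes to `F(k 2^{-(J+1)})`.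
-/
open MeasureTheory Finset

/-- The Haar wavelet function `ψ_{jk}(t) = 2^{j/2} ψ(2^j t - k)`. -/
noncomputable def haar (j k : ℕ) (t : ℝ) : ℝ :=
  if (k : ℝ) / 2 ^ j ≤ t ∧ t < ((k : ℝ) + 1 / 2) / 2 ^ j then (2 : ℝ) ^ ((j : ℝ) / 2)
  else if ((k : ℝ) + 1 / 2) / 2 ^ j ≤ t ∧ t < ((k : ℝ) + 1) / 2 ^ j then
    -(2 : ℝ) ^ ((j : ℝ) / 2)
  else 0

/-- The empirical cdf of samples `X₁,…,Xₙ` (ties at dyadic points handled by the strict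
inequality convention, samples in `[0,1)`). -/
noncomputable def empCdf (n : ℕ) (X : Fin n → ℝ) (x : ℝ) : ℝ :=
  (1 / n) * ∑ i, (if X i < x then (1 : ℝ) else 0)

/-- Empirical wavelet coefficient `a*_{jk} = (1/n) Σᵢ ψ_{jk}(Xᵢ)`. -/
noncomputable def empCoef (n : ℕ) (X : Fin n → ℝ) (j k : ℕ) : ℝ :=
  (1 / n) * ∑ i, haar j k (X i)

/-- The `J`-th order wavelet expansion `f*_J` of the empirical distribution. -/
noncomputable def waveletPdf (n : ℕ) (X : Fin n → ℝ) (J : ℕ) (x : ℝ) : ℝ :=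
  1 + ∑ j ∈ range (J + 1), ∑ k ∈ range (2 ^ j), empCoef n X j k * haar j k x

noncomputable def dyadicIndex (J : ℕ) (t : ℝ) : ℕ := ⌊2 ^ J * t⌋₊

lemma dyadicIndex_lt_iff {J c : ℕ} {t : ℝ} (ht : 0 ≤ t) :
    dyadicIndex J t < c ↔ t < c / 2 ^ J := by
  rw [dyadicIndex, Nat.floor_lt (by positivity), mul_comm, ← lt_div_iff₀ (by positivity)]

lemma dyadicIndex_eq_iff {J c : ℕ} {t : ℝ} (ht : 0 ≤ t) :
    dyadicIndex J t = c ↔ t ∈ Set.Ico ((c : ℝ) / 2 ^ J) ((c + 1) / 2 ^ J) := by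
  have h : dyadicIndex J t = c ↔ ¬ dyadicIndex J t < c ∧ dyadicIndex J t < c + 1 := by omega
  rw [h, dyadicIndex_lt_iff ht, dyadicIndex_lt_iff ht, Set.mem_Ico, not_lt]
  push_cast
  rfl

lemma dyadicIndex_lt_two_pow {J : ℕ} {t : ℝ} (ht : t ∈ Set.Ico (0 : ℝ) 1) :
    dyadicIndex J t < 2 ^ J := by
  rw [dyadicIndex_lt_iff ht.1]
  push_cast
  rw [div_self (by positivity)]
  exact ht.2

lemma dyadicIndex_succ_div_two (J : ℕ) (t : ℝ) :
    dyadicIndex (J + 1) t / 2 = dyadicIndex J t := by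
  rw [dyadicIndex, dyadicIndex, ← Nat.floor_div_natCast]
  congr 1
  push_cast
  ring

lemma haar_eq_ite {j k : ℕ} {t : ℝ} (ht : 0 ≤ t) :
    haar j k t = if dyadicIndex (j + 1) t = 2 * k then (2 : ℝ) ^ ((j : ℝ) / 2)
      else if dyadicIndex (j + 1) t = 2 * k + 1 then -(2 : ℝ) ^ ((j : ℝ) / 2) else 0 := by
  have hdiv : ∀ x : ℝ, x / 2 ^ j = 2 * x / 2 ^ (j + 1) := fun x => by
    rw [pow_succ]; field_simp
  simp only [haar, dyadicIndex_eq_iff ht, Set.mem_Ico, hdiv]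
  push_cast
  ring_nf

lemma haar_mul_haar {j k : ℕ} {y t : ℝ} (hy : 0 ≤ y) (ht : 0 ≤ t) :
    haar j k y * haar j k t =
      if dyadicIndex (j + 1) y / 2 = k ∧ dyadicIndex (j + 1) t / 2 = k then
        (if dyadicIndex (j + 1) y % 2 = dyadicIndex (j + 1) t % 2 then 2 ^ j else -2 ^ j)
      else 0 := by
  have hsq : (2 : ℝ) ^ ((j : ℝ) / 2) * 2 ^ ((j : ℝ) / 2) = 2 ^ j := by
    rw [← Real.rpow_add two_pos, add_halves, Real.rpow_natCast]
  rw [haar_eq_ite hy, haar_eq_ite ht]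
  split_ifs <;> first | omega | simp [hsq]

lemma sum_haar_mul_haar {j : ℕ} {y t : ℝ} (hy : y ∈ Set.Ico (0 : ℝ) 1) (ht : 0 ≤ t) :
    ∑ k ∈ range (2 ^ j), haar j k y * haar j k t =
      if dyadicIndex j y = dyadicIndex j t then
        (if dyadicIndex (j + 1) y = dyadicIndex (j + 1) t then 2 ^ j else -2 ^ j)
      else 0 := by
  rw [sum_eq_single (dyadicIndex j y)]
  · rw [haar_mul_haar hy.1 ht, ← dyadicIndex_succ_div_two j y, ← dyadicIndex_succ_div_two j t]
    split_ifs <;> first | rfl | omega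
  · intro k _ hk
    rw [haar_mul_haar hy.1 ht, dyadicIndex_succ_div_two, if_neg (by tauto)]
  · intro h
    exact absurd (mem_range.2 (dyadicIndex_lt_two_pow hy)) h

lemma one_add_sum_haar_mul_haar (J : ℕ) {y t : ℝ} (hy : y ∈ Set.Ico (0 : ℝ) 1)
    (ht : t ∈ Set.Ico (0 : ℝ) 1) :
    1 + ∑ j ∈ range J, ∑ k ∈ range (2 ^ j), haar j k y * haar j k t =
      if dyadicIndex J y = dyadicIndex J t then 2 ^ J else 0 := by
  induction J with
  | zero =>
    have hy0 : dyadicIndex 0 y = 0 := Nat.lt_one_iff.1 (dyadicIndex_lt_two_pow hy)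
    have ht0 : dyadicIndex 0 t = 0 := Nat.lt_one_iff.1 (dyadicIndex_lt_two_pow ht)
    simp [hy0, ht0]
  | succ J ih =>
    rw [sum_range_succ, ← add_assoc, ih, sum_haar_mul_haar hy ht.1,
      ← dyadicIndex_succ_div_two J y, ← dyadicIndex_succ_div_two J t]
    split_ifs <;> first | omega | ring

lemma waveletPdf_eq_mul_sum_ite {n : ℕ} (hn : 0 < n) {X : Fin n → ℝ}
    (hX : ∀ i, X i ∈ Set.Ico (0 : ℝ) 1) (J : ℕ) {t : ℝ} (ht : t ∈ Set.Ico (0 : ℝ) 1) :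
    waveletPdf n X J t =
      2 ^ (J + 1) *
        ((1 / n) * ∑ i, if dyadicIndex (J + 1) (X i) = dyadicIndex (J + 1) t then 1 else 0) := by
  have hn' : (n : ℝ) ≠ 0 := by positivity
  calc waveletPdf n X J t
      = (1 / n : ℝ) *
          ∑ i, (1 + ∑ j ∈ range (J + 1), ∑ k ∈ range (2 ^ j),
            haar j k (X i) * haar j k t) := by
        rw [sum_add_distrib, sum_const, card_univ, Fintype.card_fin, nsmul_one, mul_add,
          one_div_mul_cancel hn', waveletPdf]
        simp only [empCoef, mul_sum, sum_mul, mul_assoc]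
        congr 1
        exact (sum_comm.trans (sum_congr rfl fun j _ => sum_comm)).symm
    _ = (1 / n) *
          ∑ i, if dyadicIndex (J + 1) (X i) = dyadicIndex (J + 1) t then 2 ^ (J + 1) else 0 := by
        simp only [one_add_sum_haar_mul_haar _ (hX _) ht]
    _ = _ := by
        rw [mul_left_comm (2 ^ (J + 1) : ℝ), mul_sum (s := univ) (a := (2 ^ (J + 1) : ℝ))]
        simp only [mul_ite, mul_one, mul_zero]

lemma empCdf_eq_zero_of_le {n : ℕ} {X : Fin n → ℝ} {x : ℝ} (hx : ∀ i, x ≤ X i) :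
    empCdf n X x = 0 := by
  simp [empCdf, not_lt.2 (hx _)]

lemma empCdf_sub_empCdf_dyadic {n : ℕ} {X : Fin n → ℝ} (hX : ∀ i, 0 ≤ X i) (J c : ℕ) :
    empCdf n X ((c + 1) / 2 ^ J) - empCdf n X (c / 2 ^ J) =
      (1 / n) * ∑ i, if dyadicIndex J (X i) = c then 1 else 0 := by
  rw [empCdf, empCdf, ← mul_sub, ← sum_sub_distrib]
  refine congrArg _ (sum_congr rfl fun i _ => ?_)
  have hlt := dyadicIndex_lt_iff (J := J) (c := c) (hX i)
  have hlt_succ := dyadicIndex_lt_iff (J := J) (c := c + 1) (hX i)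
  push_cast at hlt_succ
  simp only [← hlt, ← hlt_succ]
  split_ifs <;> first | omega | norm_num

lemma intervalIntegral_waveletPdf_dyadic {n : ℕ} (hn : 0 < n) {X : Fin n → ℝ}
    (hX : ∀ i, X i ∈ Set.Ico (0 : ℝ) 1) (J : ℕ) {c : ℕ} (hc : c < 2 ^ (J + 1)) :
    IntervalIntegrable (waveletPdf n X J) volume (c / 2 ^ (J + 1)) ((c + 1) / 2 ^ (J + 1)) ∧
      ∫ t in (c / 2 ^ (J + 1) : ℝ)..((c + 1) / 2 ^ (J + 1)), waveletPdf n X J t =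
        empCdf n X ((c + 1) / 2 ^ (J + 1)) - empCdf n X (c / 2 ^ (J + 1)) := by
  set a : ℝ := c / 2 ^ (J + 1)
  set b : ℝ := (c + 1) / 2 ^ (J + 1)
  have hba : b - a = 1 / 2 ^ (J + 1) := by ring
  have hab : a ≤ b := by linarith [show (0 : ℝ) < 1 / 2 ^ (J + 1) by positivity]
  have hb : b ≤ 1 := (div_le_one (by positivity)).2 (by exact_mod_cast hc)
  have hconst : Set.EqOn (waveletPdf n X J) (fun _ => 2 ^ (J + 1) * (empCdf n X b - empCdf n X a))
      (Set.Ioo a b) := by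
    intro t ht
    have ht' : t ∈ Set.Ico (0 : ℝ) 1 :=
      ⟨(by positivity : 0 ≤ a).trans ht.1.le, ht.2.trans_le hb⟩
    have hidx : dyadicIndex (J + 1) t = c :=
      (dyadicIndex_eq_iff ht'.1).2 (Set.Ioo_subset_Ico_self ht)
    rw [waveletPdf_eq_mul_sum_ite hn hX J ht', hidx, empCdf_sub_empCdf_dyadic fun i => (hX i).1]
  refine ⟨(intervalIntegrable_congr_uIoo (by rwa [Set.uIoo_of_le hab])).2
    intervalIntegrable_const, ?_⟩
  rw [intervalIntegral.integral_congr_Ioo_of_le hab hconst, intervalIntegral.integral_const,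
    smul_eq_mul, hba, ← mul_assoc, one_div_mul_cancel (by positivity), one_mul]

/-- The cdf reconstructed from the wavelet expansion agrees with the empirical cdf at
every dyadic point `k · 2^{-(J+1)}`, `k = 0, 1, …, 2^{J+1}`. -/
theorem waveletCdf_eq_empCdf_at_dyadic (n : ℕ) (hn : 0 < n) (J : ℕ) (X : Fin n → ℝ)
    (hX : ∀ i, X i ∈ Set.Ico (0 : ℝ) 1) (k : ℕ) (hk : k ≤ 2 ^ (J + 1)) :
    (∫ t in (0 : ℝ)..((k : ℝ) / 2 ^ (J + 1)), waveletPdf n X J t)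
      = empCdf n X ((k : ℝ) / 2 ^ (J + 1)) := by
  set a : ℕ → ℝ := fun c => c / 2 ^ (J + 1)
  have hcell : ∀ c < k, IntervalIntegrable (waveletPdf n X J) volume (a c) (a (c + 1)) ∧
      ∫ t in a c..a (c + 1), waveletPdf n X J t = empCdf n X (a (c + 1)) - empCdf n X (a c) :=
    fun c hc => by
      simpa only [a, Nat.cast_succ] using
        intervalIntegral_waveletPdf_dyadic hn hX J (hc.trans_le hk)
  have ha0 : a 0 = 0 := by simp [a]
  calc ∫ t in (0 : ℝ)..a k, waveletPdf n X J t
      = ∑ c ∈ range k, ∫ t in a c..a (c + 1), waveletPdf n X J t := by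
        rw [intervalIntegral.sum_integral_adjacent_intervals fun c hc => (hcell c hc).1, ha0]
    _ = ∑ c ∈ range k, (empCdf n X (a (c + 1)) - empCdf n X (a c)) :=
        sum_congr rfl fun c hc => (hcell c (mem_range.1 hc)).2
    _ = empCdf n X (a k) := by
        rw [sum_range_sub (fun c => empCdf n X (a c)), ha0,
          empCdf_eq_zero_of_le fun i => (hX i).1, sub_zero]
end

section
/- For one-dimensional distributions on [0,1] with cdfs F₁ and F₂, if for each k ∈ {0,…,2^{J+1}} we have F₁(k·2^{−(J+1)}) = F₂(k·2^{−(J+1)}), and both F₁, F₂ are nondecreasing with F₁(0)=F₂(0)=0, F₁(1)=F₂(1)=1, then ∫₀¹ |F₁(x) − F₂(x)| dx ≤ 2^{−(J+1)}. -/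
open MeasureTheory

/-- Two nondecreasing cdfs on `[0,1]` with values in `[0,1]`, endpoint values `0` and `1`,
that agree at all dyadic points `k·2^{-(J+1)}` are within `2^{-(J+1)}` of each other in
Wasserstein-1 (i.e. `L¹`) distance. -/
theorem wasserstein_le_of_agree_at_dyadic (J : ℕ) (F₁ F₂ : ℝ → ℝ)
    (h₁ : MonotoneOn F₁ (Set.Icc 0 1)) (h₂ : MonotoneOn F₂ (Set.Icc 0 1))
    (hmap₁ : Set.MapsTo F₁ (Set.Icc 0 1) (Set.Icc 0 1))
    (hmap₂ : Set.MapsTo F₂ (Set.Icc 0 1) (Set.Icc 0 1))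
    (h₁0 : F₁ 0 = 0) (h₂0 : F₂ 0 = 0) (h₁1 : F₁ 1 = 1) (h₂1 : F₂ 1 = 1)
    (hagree : ∀ k : ℕ, k ≤ 2 ^ (J + 1) →
      F₁ ((k : ℝ) / 2 ^ (J + 1)) = F₂ ((k : ℝ) / 2 ^ (J + 1))) :
    ∫ x in (0 : ℝ)..1, |F₁ x - F₂ x| ≤ 1 / 2 ^ (J + 1) := by
  set n : ℕ := 2 ^ (J + 1) with hn
  have hN : (0:ℝ) < 2 ^ (J + 1) := by positivity
  set a : ℕ → ℝ := fun k => (k : ℝ) / 2 ^ (J + 1) with ha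
  have ha0 : a 0 = 0 := by simp [ha]
  have han : a n = 1 := by
    simp only [ha, hn]
    rw [div_eq_one_iff_eq (ne_of_gt hN)]
    push_cast; ring
  have hamono : ∀ k l : ℕ, k ≤ l → a k ≤ a l := fun k l h => by
    simp only [ha]; gcongr
  have haIcc : ∀ k, k ≤ n → a k ∈ Set.Icc (0:ℝ) 1 := fun k hk => by
    constructor
    · rw [← ha0]; exact hamono 0 k (Nat.zero_le _)
    · rw [← han]; exact hamono k n hk
  -- integrability
  have hint1 : IntegrableOn F₁ (Set.Icc (0:ℝ) 1) := h₁.integrableOn_isCompact isCompact_Icc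
  have hint2 : IntegrableOn F₂ (Set.Icc (0:ℝ) 1) := h₂.integrableOn_isCompact isCompact_Icc
  have hg : IntegrableOn (fun x => |F₁ x - F₂ x|) (Set.Icc (0:ℝ) 1) := (hint1.sub hint2).abs
  have hsub : ∀ k < n, IntervalIntegrable (fun x => |F₁ x - F₂ x|) volume (a k) (a (k+1)) := by
    intro k hk
    rw [intervalIntegrable_iff_integrableOn_Icc_of_le (hamono k (k+1) (Nat.le_succ k))]
    exact hg.mono_set (Set.Icc_subset_Icc (haIcc k hk.le).1 (haIcc (k+1) hk).2)
  have hsplit := intervalIntegral.sum_integral_adjacent_intervals hsub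
  rw [ha0, han] at hsplit
  rw [← hsplit]
  have hstep : ∀ k, a (k+1) - a k = 1 / 2 ^ (J + 1) := fun k => by
    simp only [ha]; push_cast; ring
  have hbound : ∀ k < n, (∫ x in a k..a (k+1), |F₁ x - F₂ x|) ≤
      (1 / 2 ^ (J + 1)) * (F₁ (a (k+1)) - F₁ (a k)) := by
    intro k hk
    have hab := hamono k (k+1) (Nat.le_succ k)
    have hka := haIcc k hk.le
    have hkb := haIcc (k+1) hk
    have hptwise : ∀ x ∈ Set.Icc (a k) (a (k+1)), |F₁ x - F₂ x| ≤ F₁ (a (k+1)) - F₁ (a k) := by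
      intro x hx
      have hxI : x ∈ Set.Icc (0:ℝ) 1 := ⟨le_trans hka.1 hx.1, le_trans hx.2 hkb.2⟩
      have e1 : F₂ (a k) = F₁ (a k) := (hagree k hk.le).symm
      have e2 : F₂ (a (k+1)) = F₁ (a (k+1)) := (hagree (k+1) hk).symm
      have b1 : F₁ (a k) ≤ F₁ x := h₁ hka hxI hx.1
      have b2 : F₁ x ≤ F₁ (a (k+1)) := h₁ hxI hkb hx.2
      have b3 : F₁ (a k) ≤ F₂ x := e1 ▸ h₂ hka hxI hx.1
      have b4 : F₂ x ≤ F₁ (a (k+1)) := e2 ▸ h₂ hxI hkb hx.2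
      rw [abs_sub_le_iff]; constructor <;> linarith
    have hconst : IntervalIntegrable (fun _ : ℝ => F₁ (a (k+1)) - F₁ (a k)) volume (a k) (a (k+1)) :=
      intervalIntegrable_const
    calc (∫ x in a k..a (k+1), |F₁ x - F₂ x|)
        ≤ ∫ _ in a k..a (k+1), (F₁ (a (k+1)) - F₁ (a k)) :=
          intervalIntegral.integral_mono_on hab (hsub k hk) hconst hptwise
      _ = (a (k+1) - a k) * (F₁ (a (k+1)) - F₁ (a k)) := by
          rw [intervalIntegral.integral_const]; simp [smul_eq_mul]
      _ = (1 / 2 ^ (J + 1)) * (F₁ (a (k+1)) - F₁ (a k)) := by rw [hstep k]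
  calc (∑ k ∈ Finset.range n, ∫ x in a k..a (k+1), |F₁ x - F₂ x|)
      ≤ ∑ k ∈ Finset.range n, (1 / 2 ^ (J + 1)) * (F₁ (a (k+1)) - F₁ (a k)) :=
        Finset.sum_le_sum (fun k hk => hbound k (Finset.mem_range.mp hk))
    _ = (1 / 2 ^ (J + 1)) * (F₁ (a n) - F₁ (a 0)) := by
        rw [← Finset.mul_sum, Finset.sum_range_sub (fun k => F₁ (a k))]
    _ = 1 / 2 ^ (J + 1) := by rw [ha0, han, h₁1, h₁0]; ring
end

section
/- Let F_J and F*_J be random functions on [0,1] with F_J(x) − F*_J(x) = Σ_{j=0}^{J} (a_{j,k₀(x)} − a*_{j,k₀(x)}) ∫₀ˣ ψ_{j,k₀(x)}(u)du, where the estimators a_{jk} are unbiased (E[a_{jk}] = a*_{jk}) with Σ_{k<2^j} Var[a_{jk}] ≤ V_j/n_j, the a_{jk} are independent across j, and |∫₀ˣ ψ_{jk}(u)du| ≤ 2^{−j/2−1}. Then E[∫₀¹ |F_J(x) − F*_J(x)| dx] ≤ √( Σ_{j=0}^{J} 2^{−(2j+2)} V_j / n_j ). -/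
open MeasureTheory ProbabilityTheory Finset

/-- The level-`j` index `k₀(x) = ⌊2^j x⌋` at which `∫₀ˣ ψ_{jk}` can be nonzero. -/
noncomputable def k₀ (j : ℕ) (x : ℝ) : ℕ := ⌊(2 : ℝ) ^ j * x⌋₊

/-!
For fixed `x`, `F_J(x) - F*_J(x)` is a sum over the levels `j` of independent centred random
variables, and since `|∫₀ˣ ψ_{jk}| ≤ 2^{-j/2-1}` the level-`j` one has variance at most
`2^{-(j+2)} Var[a_{j,k₀(x)}]`. Hence `E|F_J(x) - F*_J(x)| ≤ √(Σⱼ 2^{-(j+2)} Var[a_{j,k₀(x)}])`.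
After exchanging `E` and `∫₀¹`, Cauchy–Schwarz moves the square root outside the `x`-integral,
and `∫₀¹ Var[a_{j,k₀(x)}] dx = 2^{-j} Σ_k Var[a_{jk}]` because `k₀ j` is constant on each
dyadic interval of length `2^{-j}`.
-/

lemma haar_eq_indicator_sub (j k : ℕ) :
    haar j k =
      (Set.Ico ((k : ℝ) / 2 ^ j) ((k + 1 / 2) / 2 ^ j)).indicator (fun _ => 2 ^ ((j : ℝ) / 2))
      - (Set.Ico (((k : ℝ) + 1 / 2) / 2 ^ j) ((k + 1) / 2 ^ j)).indicator
          (fun _ => 2 ^ ((j : ℝ) / 2)) := by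
  ext t
  simp only [haar, Pi.sub_apply, Set.indicator_apply, Set.mem_Ico]
  split_ifs with h₁ h₂ <;> first | (exfalso; linarith [h₁.2, h₂.1]) | ring

lemma integrable_indicator_Ico_const (a b c : ℝ) :
    Integrable ((Set.Ico a b).indicator fun _ => c) :=
  (integrableOn_const measure_Ico_lt_top.ne).integrable_indicator measurableSet_Ico

lemma integrable_haar (j k : ℕ) : Integrable (haar j k) := by
  rw [haar_eq_indicator_sub]
  exact (integrable_indicator_Ico_const _ _ _).sub (integrable_indicator_Ico_const _ _ _)

lemma abs_integral_haar_le (j k : ℕ) (x : ℝ) :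
    |∫ u in (0 : ℝ)..x, haar j k u| ≤ 2 ^ (-(j : ℝ) / 2 - 1) := by
  set μ := volume.restrict (Set.uIoc 0 x)
  have hpiece : ∀ s t : ℝ, t - s = 1 / (2 * 2 ^ j) →
      0 ≤ μ.real (Set.Ico s t) ∧ μ.real (Set.Ico s t) ≤ 1 / (2 * 2 ^ j) := by
    intro s t hst
    refine ⟨measureReal_nonneg, ?_⟩
    rw [measureReal_restrict_apply measurableSet_Ico]
    calc volume.real (Set.Ico s t ∩ Set.uIoc 0 x) ≤ volume.real (Set.Ico s t) :=
          measureReal_mono Set.inter_subset_left measure_Ico_lt_top.ne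
      _ = 1 / (2 * 2 ^ j) := by rw [Real.volume_real_Ico, hst, max_eq_left (by positivity)]
  obtain ⟨hP₀, hP⟩ := hpiece ((k : ℝ) / 2 ^ j) ((k + 1 / 2) / 2 ^ j) (by field_simp; ring)
  obtain ⟨hQ₀, hQ⟩ := hpiece (((k : ℝ) + 1 / 2) / 2 ^ j) ((k + 1) / 2 ^ j) (by field_simp; ring)
  have hcoeff : (2 : ℝ) ^ (-(j : ℝ) / 2 - 1) = 2 ^ ((j : ℝ) / 2) * (1 / (2 * 2 ^ j)) := by
    have hsq : (2 : ℝ) ^ ((j : ℝ) / 2) * 2 ^ ((j : ℝ) / 2) = 2 ^ j := by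
      rw [← Real.rpow_add two_pos, add_halves, Real.rpow_natCast]
    rw [Real.rpow_sub two_pos, Real.rpow_one, neg_div, Real.rpow_neg two_pos.le, ← hsq]
    field_simp
  rw [← Real.norm_eq_abs, intervalIntegral.norm_integral_eq_norm_integral_uIoc,
    haar_eq_indicator_sub]
  simp only [Pi.sub_apply]
  rw [integral_sub (integrable_indicator_Ico_const _ _ _).restrict
      (integrable_indicator_Ico_const _ _ _).restrict,
    integral_indicator_const _ measurableSet_Ico, integral_indicator_const _ measurableSet_Ico,
    smul_eq_mul, smul_eq_mul, ← sub_mul, norm_mul, Real.norm_eq_abs,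
    Real.norm_of_nonneg (by positivity), hcoeff, mul_comm]
  gcongr
  rw [abs_le]
  constructor <;> linarith

lemma sq_integral_haar_le (j k : ℕ) (x : ℝ) :
    (∫ u in (0 : ℝ)..x, haar j k u) ^ 2 ≤ (2 ^ (j + 2) : ℝ)⁻¹ := by
  have hsq : ((2 : ℝ) ^ (-(j : ℝ) / 2 - 1)) ^ 2 = (2 ^ (j + 2))⁻¹ := by
    rw [← Real.rpow_natCast, ← Real.rpow_mul zero_le_two, ← Real.rpow_natCast,
      ← Real.rpow_neg zero_le_two]
    push_cast
    ring_nf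
  rw [← hsq, ← sq_abs]
  exact pow_le_pow_left₀ (abs_nonneg _) (abs_integral_haar_le j k x) 2

lemma measurable_k₀ (j : ℕ) : Measurable (k₀ j) := (measurable_id.const_mul _).nat_floor

lemma k₀_lt_two_pow (j : ℕ) {x : ℝ} (hx₀ : 0 ≤ x) (hx₁ : x < 1) : k₀ j x < 2 ^ j := by
  refine (Nat.floor_lt (by positivity)).2 ?_
  push_cast
  exact mul_lt_of_lt_one_right (by positivity) hx₁

lemma k₀_eq_of_mem_Ico {j k : ℕ} {x : ℝ}
    (hx : x ∈ Set.Ico ((k : ℝ) / 2 ^ j) ((k + 1) / 2 ^ j)) : k₀ j x = k := by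
  rw [Set.mem_Ico, div_le_iff₀' (by positivity), lt_div_iff₀' (by positivity)] at hx
  exact (Nat.floor_eq_iff (by linarith [(k.cast_nonneg : (0:ℝ) ≤ k)])).2 hx

lemma measurable_integral_haar_k₀ (j : ℕ) :
    Measurable fun x => ∫ u in (0 : ℝ)..x, haar j (k₀ j x) u := by
  have hprim : Measurable fun p : ℝ × ℕ => ∫ u in (0 : ℝ)..p.1, haar j p.2 u :=
    measurable_from_prod_countable_left fun k =>
      (intervalIntegral.continuous_primitive
        (fun _ _ => (integrable_haar j k).intervalIntegrable) 0).measurable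
  exact hprim.comp (measurable_id.prodMk (measurable_k₀ j))

lemma integrableOn_comp_k₀_Ico (j k : ℕ) (h : ℕ → ℝ) :
    IntegrableOn (fun x => h (k₀ j x)) (Set.Ico ((k : ℝ) / 2 ^ j) ((k + 1) / 2 ^ j)) :=
  (integrableOn_const (C := h k) measure_Ico_lt_top.ne).congr_fun
    (fun _ hx => by rw [k₀_eq_of_mem_Ico hx]) measurableSet_Ico

lemma setIntegral_comp_k₀_Ico (j k : ℕ) (h : ℕ → ℝ) :
    ∫ x in Set.Ico ((k : ℝ) / 2 ^ j) ((k + 1) / 2 ^ j), h (k₀ j x) = h k / 2 ^ j := by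
  rw [setIntegral_congr_fun measurableSet_Ico (fun _ hx => by rw [k₀_eq_of_mem_Ico hx]),
    setIntegral_const, Real.volume_real_Ico, smul_eq_mul,
    max_eq_left (by rw [← sub_div, add_sub_cancel_left]; positivity)]
  field_simp
  ring

lemma intervalIntegrable_comp_k₀ (j k : ℕ) (h : ℕ → ℝ) :
    IntervalIntegrable (fun x => h (k₀ j x)) volume
      ((k : ℝ) / 2 ^ j) (((k + 1 : ℕ) : ℝ) / 2 ^ j) := by
  rw [intervalIntegrable_iff_integrableOn_Ico_of_le (by gcongr; simp), Nat.cast_succ]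
  exact integrableOn_comp_k₀_Ico j k h

lemma integrableOn_Ioo_comp_k₀ (j : ℕ) (h : ℕ → ℝ) :
    IntegrableOn (fun x => h (k₀ j x)) (Set.Ioo 0 1) := by
  have hiter := IntervalIntegrable.trans_iterate (a := fun k : ℕ => (k : ℝ) / 2 ^ j)
    (n := 2 ^ j) fun k _ => intervalIntegrable_comp_k₀ j k h
  rw [Nat.cast_zero, zero_div, Nat.cast_pow, Nat.cast_ofNat, div_self (by positivity)] at hiter
  exact (intervalIntegrable_iff_integrableOn_Ioo_of_le zero_le_one).1 hiter

lemma setIntegral_Ioo_comp_k₀ (j : ℕ) (h : ℕ → ℝ) :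
    ∫ x in Set.Ioo 0 1, h (k₀ j x) = (∑ k ∈ range (2 ^ j), h k) / 2 ^ j := by
  have hsum := intervalIntegral.sum_integral_adjacent_intervals
    (a := fun k : ℕ => (k : ℝ) / 2 ^ j) (n := 2 ^ j) fun k _ => intervalIntegrable_comp_k₀ j k h
  rw [Nat.cast_zero, zero_div, Nat.cast_pow, Nat.cast_ofNat, div_self (by positivity)] at hsum
  rw [← integral_Ioc_eq_integral_Ioo, ← intervalIntegral.integral_of_le zero_le_one, ← hsum,
    sum_div]
  refine sum_congr rfl fun k _ => ?_
  rw [Nat.cast_succ, intervalIntegral.integral_of_le (by gcongr; simp),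
    integral_Ioc_eq_integral_Ioo, ← integral_Ico_eq_integral_Ioo, setIntegral_comp_k₀_Ico]

lemma setIntegral_Ioo_sum_comp_k₀ (s : Finset ℕ) (c : ℕ → ℝ) (h : ℕ → ℕ → ℝ) :
    ∫ x in Set.Ioo 0 1, ∑ j ∈ s, c j * h j (k₀ j x)
      = ∑ j ∈ s, c j * ((∑ k ∈ range (2 ^ j), h j k) / 2 ^ j) := by
  rw [integral_finsetSum _ fun j _ => (integrableOn_Ioo_comp_k₀ j _).const_mul _]
  simp only [integral_const_mul, setIntegral_Ioo_comp_k₀]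

section Jensen

variable {α : Type*} [MeasurableSpace α] {μ : Measure α}

lemma integral_le_sqrt_integral_sq [IsProbabilityMeasure μ] {Y : α → ℝ} (hY : MemLp Y 2 μ) :
    ∫ x, Y x ∂μ ≤ √(∫ x, Y x ^ 2 ∂μ) := by
  have h := variance_nonneg Y μ
  rw [variance_eq_sub hY] at h
  exact (le_abs_self _).trans (Real.abs_le_sqrt (by simpa using h))

lemma integral_abs_le_sqrt_variance [IsProbabilityMeasure μ] {Z : α → ℝ} (hZ : MemLp Z 2 μ)
    (hZ₀ : μ[Z] = 0) : ∫ x, |Z x| ∂μ ≤ √(variance Z μ) := by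
  rw [variance_of_integral_eq_zero hZ.aemeasurable hZ₀]
  simpa only [Pi.abs_apply, sq_abs] using integral_le_sqrt_integral_sq hZ.abs

lemma memLp_two_sqrt {f : α → ℝ} (hf : Integrable f μ) (hf₀ : 0 ≤ᵐ[μ] f) :
    MemLp (fun x => √(f x)) 2 μ := by
  refine (memLp_two_iff_integrable_sq
    (Real.continuous_sqrt.comp_aestronglyMeasurable hf.aestronglyMeasurable)).2 ?_
  refine hf.congr ?_
  filter_upwards [hf₀] with x hx
  exact (Real.sq_sqrt hx).symm

lemma integral_sqrt_le_sqrt_integral [IsProbabilityMeasure μ] {f : α → ℝ} (hf : Integrable f μ)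
    (hf₀ : 0 ≤ᵐ[μ] f) : ∫ x, √(f x) ∂μ ≤ √(∫ x, f x ∂μ) := by
  refine (integral_le_sqrt_integral_sq (memLp_two_sqrt hf hf₀)).trans_eq ?_
  congr 1
  refine integral_congr_ae ?_
  filter_upwards [hf₀] with x hx
  exact Real.sq_sqrt hx

end Jensen

section EstimationError

variable {Ω : Type*}

/-- The level-`j` summand of `F_J(x) - F*_J(x)`. -/
noncomputable def levelError (a : ℕ → ℕ → Ω → ℝ) (astar : ℕ → ℕ → ℝ) (j : ℕ) (x : ℝ) (ω : Ω) :
    ℝ :=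
  (a j (k₀ j x) ω - astar j (k₀ j x)) * ∫ u in (0 : ℝ)..x, haar j (k₀ j x) u

/-- `F_J(x) - F*_J(x)`. -/
noncomputable def estimationError (a : ℕ → ℕ → Ω → ℝ) (astar : ℕ → ℕ → ℝ) (J : ℕ) (x : ℝ) :
    Ω → ℝ :=
  ∑ j ∈ range (J + 1), levelError a astar j x

variable {a : ℕ → ℕ → Ω → ℝ} {astar : ℕ → ℕ → ℝ}

lemma abs_levelError_le {x : ℝ} (hx : x ∈ Set.Ioo 0 1) (j : ℕ) (ω : Ω) :
    |levelError a astar j x ω| ≤ ∑ k ∈ range (2 ^ j), |a j k ω - astar j k| := by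
  have hprim : |∫ u in (0 : ℝ)..x, haar j (k₀ j x) u| ≤ 1 :=
    (abs_integral_haar_le j _ x).trans
      (Real.rpow_le_one_of_one_le_of_nonpos one_le_two (by linarith [(j.cast_nonneg : (0:ℝ) ≤ j)]))
  rw [levelError, abs_mul]
  calc |a j (k₀ j x) ω - astar j (k₀ j x)| * |∫ u in (0 : ℝ)..x, haar j (k₀ j x) u|
      ≤ |a j (k₀ j x) ω - astar j (k₀ j x)| := mul_le_of_le_one_right (abs_nonneg _) hprim
    _ ≤ ∑ k ∈ range (2 ^ j), |a j k ω - astar j k| :=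
        single_le_sum (f := fun k => |a j k ω - astar j k|) (fun _ _ => abs_nonneg _)
          (mem_range.2 (k₀_lt_two_pow j hx.1.le hx.2))

variable [MeasurableSpace Ω] {μ : Measure Ω}

lemma memLp_levelError [IsFiniteMeasure μ] (hL2 : ∀ j k, MemLp (a j k) 2 μ) (j : ℕ) (x : ℝ) :
    MemLp (levelError a astar j x) 2 μ :=
  ((hL2 j _).sub (memLp_const _)).mul_const _

lemma integral_levelError_eq_zero [IsProbabilityMeasure μ] {j : ℕ} {x : ℝ}
    (hint : Integrable (a j (k₀ j x)) μ) (hmean : ∫ ω, a j (k₀ j x) ω ∂μ = astar j (k₀ j x)) :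
    μ[levelError a astar j x] = 0 := by
  unfold levelError
  rw [integral_mul_const, integral_sub hint (integrable_const _), hmean, integral_const,
    probReal_univ, one_smul, sub_self, zero_mul]

lemma variance_levelError_le [IsProbabilityMeasure μ] {j : ℕ} {x : ℝ}
    (hmeas : AEStronglyMeasurable (a j (k₀ j x)) μ) :
    variance (levelError a astar j x) μ ≤ (2 ^ (j + 2) : ℝ)⁻¹ * variance (a j (k₀ j x)) μ := by
  unfold levelError
  rw [variance_mul_const, variance_sub_const hmeas, mul_comm]
  exact mul_le_mul_of_nonneg_right (sq_integral_haar_le j _ x) (variance_nonneg _ _)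

lemma indepFun_levelError
    (hindep : iIndepFun (m := fun _ : ℕ => (inferInstance : MeasurableSpace (ℕ → ℝ)))
      (fun j ω k => a j k ω) μ) (x : ℝ) {i j : ℕ} (hij : i ≠ j) :
    IndepFun (levelError a astar i x) (levelError a astar j x) μ := by
  have hφ : ∀ l, Measurable fun v : ℕ → ℝ =>
      (v (k₀ l x) - astar l (k₀ l x)) * ∫ u in (0 : ℝ)..x, haar l (k₀ l x) u :=
    fun l => ((measurable_pi_apply _).sub measurable_const).mul_const _
  exact (hindep.indepFun hij).comp (hφ i) (hφ j)

lemma integral_abs_estimationError_le [IsProbabilityMeasure μ] {J : ℕ}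
    (hL2 : ∀ j k, MemLp (a j k) 2 μ)
    (hunbiased : ∀ j ≤ J, ∀ k < 2 ^ j, ∫ ω, a j k ω ∂μ = astar j k)
    (hindep : iIndepFun (m := fun _ : ℕ => (inferInstance : MeasurableSpace (ℕ → ℝ)))
      (fun j ω k => a j k ω) μ) {x : ℝ} (hx : x ∈ Set.Ioo 0 1) :
    ∫ ω, |estimationError a astar J x ω| ∂μ
      ≤ √(∑ j ∈ range (J + 1), (2 ^ (j + 2) : ℝ)⁻¹ * variance (a j (k₀ j x)) μ) := by
  have hmem : ∀ j ∈ range (J + 1), MemLp (levelError a astar j x) 2 μ :=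
    fun j _ => memLp_levelError hL2 j x
  have hmean : μ[estimationError a astar J x] = 0 := by
    simp only [estimationError, Finset.sum_apply]
    rw [integral_finsetSum _ fun j hj => (hmem j hj).integrable one_le_two]
    refine sum_eq_zero fun j hj => integral_levelError_eq_zero
      ((hL2 j _).integrable one_le_two) ?_
    exact hunbiased j (Nat.lt_succ_iff.1 (mem_range.1 hj)) _ (k₀_lt_two_pow j hx.1.le hx.2)
  have hvar : variance (estimationError a astar J x) μ
      = ∑ j ∈ range (J + 1), variance (levelError a astar j x) μ :=
    IndepFun.variance_sum hmem fun i _ j _ hij => indepFun_levelError hindep x hij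
  calc ∫ ω, |estimationError a astar J x ω| ∂μ
      ≤ √(variance (estimationError a astar J x) μ) :=
        integral_abs_le_sqrt_variance (memLp_finsetSum' _ hmem) hmean
    _ ≤ _ := by
        rw [hvar]
        gcongr with j
        exact variance_levelError_le (hL2 j _).aestronglyMeasurable

lemma measurable_levelError_uncurry (hmeas : ∀ j k, Measurable (a j k)) (j : ℕ) :
    Measurable fun p : Ω × ℝ => levelError a astar j p.2 p.1 := by
  have ha : Measurable fun p : Ω × ℕ => a j p.2 p.1 :=
    measurable_from_prod_countable_left fun k => hmeas j k
  have hk : Measurable fun p : Ω × ℝ => k₀ j p.2 := (measurable_k₀ j).comp measurable_snd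
  exact ((ha.comp (measurable_fst.prodMk hk)).sub (measurable_from_nat.comp hk)).mul
    ((measurable_integral_haar_k₀ j).comp measurable_snd)

lemma integrable_abs_estimationError_prod [IsFiniteMeasure μ] (hmeas : ∀ j k, Measurable (a j k))
    (hL2 : ∀ j k, MemLp (a j k) 2 μ) (J : ℕ) :
    Integrable (fun p : Ω × ℝ => |estimationError a astar J p.2 p.1|)
      (μ.prod (volume.restrict (Set.Ioo 0 1))) := by
  set G : Ω → ℝ := fun ω => ∑ j ∈ range (J + 1), ∑ k ∈ range (2 ^ j), |a j k ω - astar j k|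
  have hG : Integrable G μ := integrable_finsetSum _ fun j _ => integrable_finsetSum _
    fun k _ => (((hL2 j k).integrable one_le_two).sub (integrable_const _)).abs
  refine (hG.comp_fst _).mono' ?_ ?_
  · simp only [estimationError, Finset.sum_apply]
    exact (Finset.measurable_sum _ fun j _ => measurable_levelError_uncurry hmeas j).abs
      |>.aestronglyMeasurable
  · filter_upwards [Measure.quasiMeasurePreserving_snd.ae (ae_restrict_mem measurableSet_Ioo)]
      with p hp
    simp only [estimationError, Finset.sum_apply, Real.norm_eq_abs, abs_abs]
    exact (abs_sum_le_sum_abs _ _).trans (sum_le_sum fun j _ => abs_levelError_le hp j p.1)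

end EstimationError

lemma inv_two_pow_mul_div_two_pow_le {j : ℕ} {S B : ℝ} (h : S ≤ B) :
    (2 ^ (j + 2) : ℝ)⁻¹ * (S / 2 ^ j) ≤ (2 : ℝ) ^ (-(2 * (j : ℝ) + 2)) * B := by
  have hpow : (2 : ℝ) ^ (-(2 * (j : ℝ) + 2)) = (2 ^ (j + 2))⁻¹ / 2 ^ j := by
    rw [Real.rpow_neg zero_le_two, show 2 * (j : ℝ) + 2 = ((j + 2 + j : ℕ) : ℝ) by push_cast; ring,
      Real.rpow_natCast, pow_add, mul_inv, div_eq_mul_inv]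
  rw [hpow, mul_div_assoc', div_mul_eq_mul_div, div_eq_mul_inv, div_eq_mul_inv]
  gcongr

theorem estimation_error_bound_general {Ω : Type*} [MeasurableSpace Ω] (μ : Measure Ω)
    [IsProbabilityMeasure μ] (J : ℕ) (a : ℕ → ℕ → Ω → ℝ) (astar : ℕ → ℕ → ℝ)
    (V n : ℕ → ℝ)
    (hmeas : ∀ j k, Measurable (a j k))
    (hL2 : ∀ j k, MemLp (a j k) 2 μ)
    (hunbiased : ∀ j ≤ J, ∀ k < 2 ^ j, ∫ ω, a j k ω ∂μ = astar j k)
    (hvar : ∀ j ≤ J, ∑ k ∈ range (2 ^ j), variance (a j k) μ ≤ V j / n j)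
    (hindep : iIndepFun (m := fun _ : ℕ => (inferInstance : MeasurableSpace (ℕ → ℝ)))
      (fun j ω k => a j k ω) μ) :
    (∫ ω, (∫ x in (0 : ℝ)..1,
        |∑ j ∈ range (J + 1),
            (a j (k₀ j x) ω - astar j (k₀ j x)) * ∫ u in (0 : ℝ)..x, haar j (k₀ j x) u|) ∂μ)
      ≤ Real.sqrt (∑ j ∈ range (J + 1), (2 : ℝ) ^ (-(2 * (j : ℝ) + 2)) * V j / n j) := by
  have : IsProbabilityMeasure (volume.restrict (Set.Ioo (0 : ℝ) 1)) := ⟨by simp⟩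
  set g : ℝ → ℝ := fun x => ∑ j ∈ range (J + 1), (2 ^ (j + 2) : ℝ)⁻¹ * variance (a j (k₀ j x)) μ
  have hg : IntegrableOn g (Set.Ioo 0 1) :=
    integrable_finsetSum _ fun j _ =>
      (integrableOn_Ioo_comp_k₀ j fun k => variance (a j k) μ).const_mul _
  have hg₀ : 0 ≤ᵐ[volume.restrict (Set.Ioo 0 1)] g :=
    ae_of_all _ fun x => sum_nonneg fun j _ => mul_nonneg (by positivity) (variance_nonneg _ _)
  calc _ = ∫ ω, (∫ x in Set.Ioo (0 : ℝ) 1, |estimationError a astar J x ω|) ∂μ := by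
        simp_rw [intervalIntegral.integral_of_le zero_le_one, integral_Ioc_eq_integral_Ioo,
          estimationError, Finset.sum_apply, levelError]
    _ = ∫ x in Set.Ioo 0 1, ∫ ω, |estimationError a astar J x ω| ∂μ :=
        integral_integral_swap (integrable_abs_estimationError_prod hmeas hL2 J)
    _ ≤ ∫ x in Set.Ioo 0 1, √(g x) :=
        integral_mono_of_nonneg (ae_of_all _ fun _ => integral_nonneg fun _ => abs_nonneg _)
          ((memLp_two_sqrt hg hg₀).integrable one_le_two)
          ((ae_restrict_mem measurableSet_Ioo).mono fun x hx =>
            integral_abs_estimationError_le hL2 hunbiased hindep hx)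
    _ ≤ √(∫ x in Set.Ioo 0 1, g x) := integral_sqrt_le_sqrt_integral hg hg₀
    _ ≤ _ := by
        rw [setIntegral_Ioo_sum_comp_k₀ _ _ fun j k => variance (a j k) μ]
        gcongr with j hj
        rw [mul_div_assoc]
        exact inv_two_pow_mul_div_two_pow_le (hvar j (Nat.lt_succ_iff.1 (mem_range.1 hj)))

/-- Bounding the expected estimation error
`E[∫₀¹|F_J(x) - F*_J(x)|dx] ≤ √(Σⱼ 2^{-(2j+2)} Vⱼ/nⱼ)` for unbiased wavelet-coefficient
estimators `a_{jk}` of `a*_{jk}` that are independent across levels `j`, with level-wise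
total variance at most `Vⱼ/nⱼ`, where
`F_J(x) - F*_J(x) = Σⱼ (a_{j,k₀(x)} - a*_{j,k₀(x)})∫₀ˣ ψ_{j,k₀(x)}(u)du`. -/
theorem estimation_error_bound {Ω : Type*} [MeasurableSpace Ω] (μ : Measure Ω)
    [IsProbabilityMeasure μ] (J : ℕ) (a : ℕ → ℕ → Ω → ℝ) (astar : ℕ → ℕ → ℝ)
    (V n : ℕ → ℝ) (hn : ∀ j, 0 < n j)
    (hmeas : ∀ j k, Measurable (a j k))
    (hL2 : ∀ j k, MemLp (a j k) 2 μ)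
    (hunbiased : ∀ j ≤ J, ∀ k < 2 ^ j, ∫ ω, a j k ω ∂μ = astar j k)
    (hvar : ∀ j ≤ J, ∑ k ∈ range (2 ^ j), variance (a j k) μ ≤ V j / n j)
    (hindep : iIndepFun (m := fun _ : ℕ => (inferInstance : MeasurableSpace (ℕ → ℝ)))
      (fun j ω k => a j k ω) μ) :
    (∫ ω, (∫ x in (0 : ℝ)..1,
        |∑ j ∈ range (J + 1),
            (a j (k₀ j x) ω - astar j (k₀ j x)) * ∫ u in (0 : ℝ)..x, haar j (k₀ j x) u|) ∂μ)
      ≤ Real.sqrt (∑ j ∈ range (J + 1), (2 : ℝ) ^ (-(2 * (j : ℝ) + 2)) * V j / n j) :=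
  estimation_error_bound_general μ J a astar V n hmeas hL2 hunbiased hvar hindep
end
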